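/- There is a constant d > 0 such that the set of positive integers n with the following property has natural density 1: every 2-dimensional tile system (of temperature 1 or 2) that terminally assembles an n×n square with probability greater than 1/2 has tile complexity at least d·(log n)/(log log n). In particular, for almost all n, the minimum tile complexity required to assemble an n×n square with probability greater than 1/2 is Ω(log n / log log n). -/

import Mathlib

/-- A 2D tile type: four glues drawn from `ℕ`, with `0` the `null` glue. -/
structure Tile2 where
  north : ℕ
  east : ℕ
  south : ℕ
  west : ℕ
deriving DecidableEq

/-- A 2D tile system `⟨T, s, τ⟩` together with the glue-strength function.
The glue function satisfies `G(x,y) = 0` for `x ≠ y`, so it is determined by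
the diagonal `strength`; `strength 0 = 0` encodes `G(null,·) = 0`. -/
structure TileSystem2 where
  tiles : Finset Tile2
  seed : Tile2
  strength : ℕ → ℕ
  temp : ℕ
  seed_mem : seed ∈ tiles
  null_strength : strength 0 = 0

/-- A configuration: a map `ℤ² → T ∪ {empty}`. -/
abbrev Config2 := ℤ × ℤ → Option Tile2

/-- Attach tile `t` at position `p`. -/
def place2 (C : Config2) (t : Tile2) (p : ℤ × ℤ) : Config2 :=
  Function.update C p (some t)

/-- The shape of a configuration: its set of non-empty positions. -/
def shape2 (C : Config2) : Set (ℤ × ℤ) := {p | C p ≠ none}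

namespace TileSystem2

variable (S : TileSystem2)

/-- Bond strength between two abutting glues: `G(x,y)`. -/
def bond (g h : ℕ) : ℕ := if g = h then S.strength g else 0

/-- Bond contributed by the neighbour at position `p` against glue `g`,
where `side` extracts the abutting side of the neighbouring tile. -/
def sideBond (C : Config2) (p : ℤ × ℤ) (g : ℕ) (side : Tile2 → ℕ) : ℕ :=
  (C p).elim 0 fun u => S.bond g (side u)

/-- Total binding strength of tile `t` at position `p` in configuration `C`. -/
def bindStrength (C : Config2) (t : Tile2) (p : ℤ × ℤ) : ℕ :=
  S.sideBond C (p.1, p.2 + 1) t.north Tile2.south +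
  S.sideBond C (p.1 + 1, p.2) t.east Tile2.west +
  S.sideBond C (p.1, p.2 - 1) t.south Tile2.north +
  S.sideBond C (p.1 - 1, p.2) t.west Tile2.east

/-- `t` is attachable to `C` at the empty position `p` if the total glue
strength with the four neighbours is at least the temperature. -/
def Attachable (C : Config2) (t : Tile2) (p : ℤ × ℤ) : Prop :=
  t ∈ S.tiles ∧ C p = none ∧ S.temp ≤ S.bindStrength C t p

/-- One assembly step: attachment of a single attachable tile. -/
def AStep (C C' : Config2) : Prop :=
  ∃ t p, S.Attachable C t p ∧ C' = place2 C t p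

/-- The configuration consisting of just the seed tile at the origin. -/
def seedConfig : Config2 := fun p => if p = (0, 0) then some S.seed else none

/-- `C` is reachable from `C₀` by repeated attachments. -/
def ProducedFrom (C₀ C : Config2) : Prop := Relation.ReflTransGen S.AStep C₀ C

/-- `C` is produced: reachable from the seed at the origin. -/
def Produced (C : Config2) : Prop := S.ProducedFrom S.seedConfig C

/-- `C` is terminal: no tile of the system is attachable anywhere. -/
def Terminal (C : Config2) : Prop := ∀ t p, ¬ S.Attachable C t p

/-- A system uniquely produces shape `Υ` if every produced supertile extends to
a terminally produced supertile of shape `Υ`. -/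
def UniquelyProduces (Υ : Set (ℤ × ℤ)) : Prop :=
  ∀ C, S.Produced C → ∃ C', S.ProducedFrom C C' ∧ S.Terminal C' ∧ shape2 C' = Υ

/-- Zig-zag behaviour started from configuration `C₀`:
(i) at every stage exactly one tile attachment is possible, and
(ii) consecutive attachments obey the zig-zag geometry: after attaching at
`p`, the next attachment at `p'` satisfies (`y p` even): `x' = x+1, y'=y` or
`y' = y+1`, and (`y p` odd): `x' = x-1, y'=y` or `y' = y+1`. -/
def ZigZagFrom (C₀ : Config2) : Prop :=
  (∀ C, S.ProducedFrom C₀ C → ¬ S.Terminal C →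
      ∃! tp : Tile2 × (ℤ × ℤ), S.Attachable C tp.1 tp.2) ∧
  (∀ C t p t' p', S.ProducedFrom C₀ C → S.Attachable C t p →
      S.Attachable (place2 C t p) t' p' →
      if p.2 % 2 = 0 then (p'.1 = p.1 + 1 ∧ p'.2 = p.2) ∨ p'.2 = p.2 + 1
      else (p'.1 = p.1 - 1 ∧ p'.2 = p.2) ∨ p'.2 = p.2 + 1)

/-- A temperature-2 zig-zag tile system (the seed counts as the 0-th placed
tile, at `(0,0)`, so the first attachment is constrained as well). -/
def ZigZag : Prop :=
  S.temp = 2 ∧ S.ZigZagFrom S.seedConfig ∧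
  ∀ t' p', S.Attachable S.seedConfig t' p' →
    (p'.1 = 1 ∧ p'.2 = 0) ∨ p'.2 = (1 : ℤ)

/-- `σ_T`: the strength-1 glues occurring on the north or south side of some
tile type of the system. -/
def nsGlues : Finset ℕ :=
  (S.tiles.image Tile2.north ∪ S.tiles.image Tile2.south).filter
    fun g => S.strength g = 1

end TileSystem2
namespace TileSystem2

/-- The number of single-tile attachments currently possible, `|A →_T|`. -/
noncomputable def choices (S : TileSystem2) (C : Config2) : ℕ :=
  Nat.card {tp : Tile2 × (ℤ × ℤ) // S.Attachable C tp.1 tp.2}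

open Classical in
/-- Probability of a particular finite sequence of attachments, starting from
`C`: each step is chosen uniformly among all currently possible attachments. -/
noncomputable def runProb (S : TileSystem2) : Config2 → List (Tile2 × (ℤ × ℤ)) → ℝ
  | _, [] => 1
  | C, tp :: L =>
      (if S.Attachable C tp.1 tp.2 then ((S.choices C : ℝ))⁻¹ else 0) *
        runProb S (place2 C tp.1 tp.2) L

/-- The configuration resulting from a finite sequence of attachments. -/
def runResult (S : TileSystem2) : Config2 → List (Tile2 × (ℤ × ℤ)) → Config2
  | C, [] => C
  | C, tp :: L => runResult S (place2 C tp.1 tp.2) L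

/-- The probability that, starting from `C₀`, the assembly Markov chain is
absorbed in a terminal supertile satisfying `E`: the sum, over all finite
assembly paths ending in such a terminal configuration, of the path
probabilities. -/
noncomputable def probEventFrom (S : TileSystem2) (C₀ : Config2) (E : Config2 → Prop) : ℝ :=
  ∑' L : {L : List (Tile2 × (ℤ × ℤ)) //
      S.Terminal (S.runResult C₀ L) ∧ E (S.runResult C₀ L)},
    S.runProb C₀ L.1

/-- The probability that the system terminally assembles a configuration
satisfying `E`, starting from the seed tile at the origin. -/
noncomputable def probEvent (S : TileSystem2) (E : Config2 → Prop) : ℝ :=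
  S.probEventFrom S.seedConfig E

end TileSystem2
/-- The `w × h` rectangle shape `{0,…,w−1} × {0,…,h−1}` (width `w`, height `h`). -/
def rectShape (w h : ℕ) : Set (ℤ × ℤ) :=
  {p | 0 ≤ p.1 ∧ p.1 < (w : ℤ) ∧ 0 ≤ p.2 ∧ p.2 < (h : ℤ)}

/-- The `n × n` square shape. -/
def squareShape (n : ℕ) : Set (ℤ × ℤ) := rectShape n n

/-! A tile system cannot assemble two different squares each with probability greater than `1/2`:
the probabilities of the terminal assembly paths sum to at most `1`. Permuting glue labels so
that they lie in `{0, …, 4K}`, and capping strengths at `2`, changes no assembly probability of a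
system of temperature at most `2`, so a system with at most `K` tile types behaves like one of
at most `(4K+3)^(8K+7)` canonical systems. For `K = ⌊log N / (32 log log N)⌋` this is at most
`√N`, and since `x / log x` is increasing for `x ≥ e`, every size `16 ≤ n ≤ N` violating the bound
is assembled by a canonical system with at most `K` tiles. Hence at most `15 + √N` sizes
`n ≤ N` are exceptional. -/

open Filter Topology Real

lemma Finset.sum_eq_sum_sum_preimage_cons {β M : Type*} [AddCommMonoid M]
    (s : Finset (List β)) (hs : [] ∉ s) (H : Finset β) (hH : ∀ b L, b :: L ∈ s → b ∈ H)
    (f : List β → M) :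
    ∑ L ∈ s, f L = ∑ b ∈ H, ∑ L ∈ s.preimage (List.cons b) List.cons_injective.injOn,
      f (b :: L) := by
  have hcons : Function.Injective fun p : β × List β => p.1 :: p.2 :=
    fun p q h => Prod.ext (List.cons.inj h).1 (List.cons.inj h).2
  rw [← Finset.sum_finset_product (s.preimage _ hcons.injOn) H _
    (f := fun p => f (p.1 :: p.2)) (fun p => by simpa using fun h => hH p.1 p.2 h),
    Finset.sum_preimage _ _ hcons.injOn]
  rintro (_ | ⟨b, L⟩) hL hrange
  · exact absurd hL hs
  · exact absurd ⟨(b, L), rfl⟩ hrange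

lemma Finset.exists_perm_map_zero_lt_card (Γ : Finset ℕ) (h0 : 0 ∈ Γ) :
    ∃ σ : Equiv.Perm ℕ, σ 0 = 0 ∧ ∀ g ∈ Γ, σ g < Γ.card := by
  -- send the `i`-th smallest element of `Γ` to `i`
  obtain ⟨σ, hσ⟩ := Equiv.Perm.exists_extending_pair (Γ.orderEmbOfFin rfl) Fin.val
    (Γ.orderEmbOfFin rfl).injective Fin.val_injective
  have hpos : 0 < Γ.card := Finset.card_pos.mpr ⟨0, h0⟩
  refine ⟨σ, ?_, fun g hg => ?_⟩
  · have hmin : Γ.orderEmbOfFin rfl ⟨0, hpos⟩ = 0 := by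
      rw [Finset.orderEmbOfFin_zero rfl hpos]
      exact Nat.eq_zero_of_le_zero (Γ.min'_le 0 h0)
    simpa [hmin] using hσ ⟨0, hpos⟩
  · obtain ⟨i, rfl⟩ : g ∈ Set.range (Γ.orderEmbOfFin rfl) := by
      rwa [Finset.range_orderEmbOfFin]
    rw [hσ]
    exact i.isLt

namespace TileSystem2

variable (S : TileSystem2)

open Classical in
noncomputable def stepProb (C : Config2) (tp : Tile2 × (ℤ × ℤ)) : ℝ :=
  if S.Attachable C tp.1 tp.2 then ((S.choices C : ℝ))⁻¹ else 0

lemma runProb_cons (C : Config2) (tp : Tile2 × (ℤ × ℤ)) (L : List (Tile2 × (ℤ × ℤ))) :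
    S.runProb C (tp :: L) = S.stepProb C tp * S.runProb (place2 C tp.1 tp.2) L :=
  rfl

lemma stepProb_nonneg (C : Config2) (tp : Tile2 × (ℤ × ℤ)) : 0 ≤ S.stepProb C tp := by
  unfold stepProb; split <;> positivity

lemma runProb_nonneg (C : Config2) (L : List (Tile2 × (ℤ × ℤ))) : 0 ≤ S.runProb C L := by
  induction L generalizing C with
  | nil => exact zero_le_one
  | cons tp L ih => exact mul_nonneg (S.stepProb_nonneg C tp) (ih _)

open Classical in
lemma sum_stepProb_le_one (C : Config2) (u : Finset (Tile2 × (ℤ × ℤ))) :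
    ∑ tp ∈ u, S.stepProb C tp ≤ 1 := by
  have hsum : ∑ tp ∈ u, S.stepProb C tp =
      (u.filter fun tp => S.Attachable C tp.1 tp.2).card * ((S.choices C : ℝ))⁻¹ := by
    simp only [stepProb, ← Finset.sum_filter, Finset.sum_const, nsmul_eq_mul]
  rw [hsum]
  rcases finite_or_infinite {tp : Tile2 × (ℤ × ℤ) // S.Attachable C tp.1 tp.2} with hfin | hinf
  · refine mul_inv_le_one_of_le₀ ?_ (Nat.cast_nonneg _)
    have := Nat.card_le_card_of_injective
      (fun x : (u.filter fun tp => S.Attachable C tp.1 tp.2) =>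
        (⟨x.1, (Finset.mem_filter.1 x.2).2⟩ : {tp : Tile2 × (ℤ × ℤ) // S.Attachable C tp.1 tp.2}))
      (fun _ _ h => Subtype.ext (congrArg Subtype.val h :))
    rw [Nat.card_eq_finsetCard] at this
    exact_mod_cast this
  · rw [choices, Nat.card_eq_zero_of_infinite]
    simp

lemma sum_runProb_le_one_of_length_le (m : ℕ) :
    ∀ (C : Config2) (s : Finset (List (Tile2 × (ℤ × ℤ)))), (∀ L ∈ s, L.length ≤ m) →
      (∀ L ∈ s, S.Terminal (S.runResult C L)) → ∑ L ∈ s, S.runProb C L ≤ 1 := by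
  induction m with
  | zero =>
    intro C s hlen _
    have hs : s ⊆ {[]} := fun L hL => by simpa using hlen L hL
    calc ∑ L ∈ s, S.runProb C L ≤ ∑ L ∈ {[]}, S.runProb C L :=
          Finset.sum_le_sum_of_subset_of_nonneg hs fun L _ _ => S.runProb_nonneg C L
      _ = 1 := Finset.sum_singleton _ _
  | succ m ih =>
    intro C s hlen hterm
    by_cases hC : S.Terminal C
    · -- from a terminal configuration only the empty path has positive probability
      calc ∑ L ∈ s, S.runProb C L ≤ ∑ L ∈ insert [] s, S.runProb C L :=
            Finset.sum_le_sum_of_subset_of_nonneg (Finset.subset_insert _ _)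
              fun L _ _ => S.runProb_nonneg C L
        _ = S.runProb C [] := by
            refine Finset.sum_eq_single_of_mem _ (Finset.mem_insert_self _ _) ?_
            rintro (_ | ⟨tp, L⟩) _ hL
            · exact absurd rfl hL
            · simp [runProb_cons, stepProb, hC tp.1 tp.2]
        _ = 1 := rfl
    · have hnil : [] ∉ s := fun h => hC (hterm [] h)
      classical
      rw [s.sum_eq_sum_sum_preimage_cons hnil ((s.image List.head?).eraseNone)
        (fun b L h => by simpa using ⟨b :: L, h, rfl⟩)]
      calc _ ≤ ∑ tp ∈ (s.image List.head?).eraseNone, S.stepProb C tp := by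
            refine Finset.sum_le_sum fun tp _ => ?_
            simp only [runProb_cons, ← Finset.mul_sum]
            refine mul_le_of_le_one_right (S.stepProb_nonneg C tp) (ih _ _ ?_ ?_)
            · intro L hL
              simpa using hlen _ (Finset.mem_preimage.mp hL)
            · exact fun L hL => hterm _ (Finset.mem_preimage.mp hL)
        _ ≤ 1 := S.sum_stepProb_le_one C _

lemma sum_runProb_le_one {C : Config2} {s : Finset (List (Tile2 × (ℤ × ℤ)))}
    (hterm : ∀ L ∈ s, S.Terminal (S.runResult C L)) : ∑ L ∈ s, S.runProb C L ≤ 1 :=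
  S.sum_runProb_le_one_of_length_le _ C s (fun _ hL => Finset.le_sup hL) hterm

lemma sum_subtype_runProb_le_one {C : Config2} {P : Set (List (Tile2 × (ℤ × ℤ)))}
    (hP : ∀ L ∈ P, S.Terminal (S.runResult C L)) (u : Finset P) :
    ∑ L ∈ u, S.runProb C L ≤ 1 := by
  have := S.sum_runProb_le_one (s := u.map (Function.Embedding.subtype _)) fun L hL => by
    obtain ⟨L, -, rfl⟩ := Finset.mem_map.mp hL
    exact hP L L.2
  rwa [Finset.sum_map] at this

lemma summable_runProb {C : Config2} {P : Set (List (Tile2 × (ℤ × ℤ)))}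
    (hP : ∀ L ∈ P, S.Terminal (S.runResult C L)) : Summable fun L : P => S.runProb C L :=
  summable_of_sum_le (fun L => S.runProb_nonneg C L) (S.sum_subtype_runProb_le_one hP)

lemma tsum_runProb_le_one {C : Config2} {P : Set (List (Tile2 × (ℤ × ℤ)))}
    (hP : ∀ L ∈ P, S.Terminal (S.runResult C L)) : ∑' L : P, S.runProb C L ≤ 1 :=
  tsum_le_of_sum_le' zero_le_one (S.sum_subtype_runProb_le_one hP)

lemma probEventFrom_add_le_one (C : Config2) {E₁ E₂ : Config2 → Prop}
    (hE : ∀ C, E₁ C → ¬ E₂ C) : S.probEventFrom C E₁ + S.probEventFrom C E₂ ≤ 1 := by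
  let P : (Config2 → Prop) → Set (List (Tile2 × (ℤ × ℤ))) :=
    fun E => {L | S.Terminal (S.runResult C L) ∧ E (S.runResult C L)}
  have hdisj : Disjoint (P E₁) (P E₂) := Set.disjoint_left.mpr fun L h₁ h₂ => hE _ h₁.2 h₂.2
  have hunion := (S.summable_runProb (P := P E₁) fun L h => h.1).tsum_union_disjoint hdisj
    (S.summable_runProb (P := P E₂) fun L h => h.1)
  exact hunion.symm.trans_le (S.tsum_runProb_le_one fun L h => h.elim And.left And.left)

end TileSystem2

def mapConfig (e : Tile2 → Tile2) (C : Config2) : Config2 := fun p => (C p).map e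

lemma mapConfig_place2 (e : Tile2 → Tile2) (C : Config2) (t : Tile2) (p : ℤ × ℤ) :
    mapConfig e (place2 C t p) = place2 (mapConfig e C) (e t) p := by
  funext q
  by_cases hq : q = p <;> simp [mapConfig, place2, hq]

@[simp]
lemma shape2_mapConfig (e : Tile2 → Tile2) (C : Config2) : shape2 (mapConfig e C) = shape2 C := by
  ext p
  simp [shape2, mapConfig]

def glueRelabel (σ : Equiv.Perm ℕ) : Tile2 ≃ Tile2 where
  toFun t := ⟨σ t.north, σ t.east, σ t.south, σ t.west⟩
  invFun t := ⟨σ.symm t.north, σ.symm t.east, σ.symm t.south, σ.symm t.west⟩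
  left_inv t := by simp
  right_inv t := by simp

lemma glueRelabel_apply (σ : Equiv.Perm ℕ) (t : Tile2) :
    glueRelabel σ t = ⟨σ t.north, σ t.east, σ t.south, σ t.west⟩ :=
  rfl

namespace TileSystem2

lemma runResult_map {S S' : TileSystem2} {e : Tile2 → Tile2} (C : Config2)
    (L : List (Tile2 × (ℤ × ℤ))) :
    S'.runResult (mapConfig e C) (L.map (Prod.map e id)) = mapConfig e (S.runResult C L) := by
  induction L generalizing C with
  | nil => rfl
  | cons tp L ih =>
    rw [List.map_cons, runResult, runResult, Prod.map_fst, Prod.map_snd, id, ← mapConfig_place2]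
    exact ih _

def IsRelabeling (e : Tile2 ≃ Tile2) (S S' : TileSystem2) : Prop :=
  ∀ C t p, S'.Attachable (mapConfig e C) (e t) p ↔ S.Attachable C t p

namespace IsRelabeling

variable {e : Tile2 ≃ Tile2} {S S' : TileSystem2}

lemma terminal_iff (h : IsRelabeling e S S') (C : Config2) :
    S'.Terminal (mapConfig e C) ↔ S.Terminal C := by
  refine ⟨fun hT t p hA => hT (e t) p ((h C t p).2 hA), fun hT t p hA => ?_⟩
  exact hT (e.symm t) p ((h C _ p).1 (by rwa [e.apply_symm_apply]))

lemma choices_eq (h : IsRelabeling e S S') (C : Config2) :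
    S'.choices (mapConfig e C) = S.choices C :=
  Nat.card_congr <| .symm <| (e.prodCongr (.refl _)).subtypeEquiv fun tp => (h C tp.1 tp.2).symm

lemma runProb_map (h : IsRelabeling e S S') (C : Config2) (L : List (Tile2 × (ℤ × ℤ))) :
    S'.runProb (mapConfig e C) (L.map (Prod.map e id)) = S.runProb C L := by
  induction L generalizing C with
  | nil => rfl
  | cons tp L ih =>
    rw [List.map_cons, runProb_cons, runProb_cons, Prod.map_fst, Prod.map_snd, id,
      ← mapConfig_place2, ih]
    congr 1
    simp only [stepProb, h.choices_eq, Prod.map_fst, Prod.map_snd, id]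
    classical exact if_congr (h C tp.1 tp.2) rfl rfl

lemma probEventFrom_eq (h : IsRelabeling e S S') (C₀ : Config2) {E : Config2 → Prop}
    (hE : ∀ C, E (mapConfig e C) ↔ E C) :
    S'.probEventFrom (mapConfig e C₀) E = S.probEventFrom C₀ E := by
  let paths := Equiv.listEquivOfEquiv (e.prodCongr (.refl (ℤ × ℤ)))
  have hpaths : ∀ L, paths L = L.map (Prod.map e id) := fun _ => rfl
  rw [probEventFrom, probEventFrom, ← (paths.subtypeEquiv fun L => ?_).tsum_eq]
  · exact tsum_congr fun L => by simp only [Equiv.subtypeEquiv_apply, hpaths, h.runProb_map]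
  · rw [hpaths, runResult_map, h.terminal_iff, hE]

end IsRelabeling

def glues (S : TileSystem2) : Finset ℕ :=
  insert 0 (S.tiles.biUnion fun t => {t.north, t.east, t.south, t.west})

lemma card_glues_le (S : TileSystem2) : S.glues.card ≤ 4 * S.tiles.card + 1 := by
  refine (Finset.card_insert_le _ _).trans (Nat.succ_le_succ ?_)
  refine Finset.card_biUnion_le.trans ?_
  rw [mul_comm, ← smul_eq_mul, ← Finset.sum_const]
  exact Finset.sum_le_sum fun t _ => Finset.card_le_four

lemma zero_mem_glues (S : TileSystem2) : 0 ∈ S.glues :=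
  Finset.mem_insert_self _ _

lemma glues_of_mem_tiles {S : TileSystem2} {t : Tile2} (ht : t ∈ S.tiles) :
    t.north ∈ S.glues ∧ t.east ∈ S.glues ∧ t.south ∈ S.glues ∧ t.west ∈ S.glues := by
  simp only [glues, Finset.mem_insert, Finset.mem_biUnion]
  exact ⟨.inr ⟨t, ht, by simp⟩, .inr ⟨t, ht, by simp⟩, .inr ⟨t, ht, by simp⟩,
    .inr ⟨t, ht, by simp⟩⟩

section Relabel

variable (S : TileSystem2) (σ : Equiv.Perm ℕ) (hσ : σ 0 = 0) (M : ℕ)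

/-- Capping strengths at `2` and cutting them off from `M` on leaves only finitely many
possible systems. -/
def relabel : TileSystem2 where
  tiles := S.tiles.map (glueRelabel σ).toEmbedding
  seed := glueRelabel σ S.seed
  strength x := if x < M then min (S.strength (σ.symm x)) 2 else 0
  temp := S.temp
  seed_mem := Finset.mem_map_equiv.mpr (by simpa using S.seed_mem)
  null_strength := by simp [σ.symm_apply_eq.mpr hσ.symm, S.null_strength]

variable {S σ M}

lemma relabel_bond (hM : ∀ g ∈ S.glues, σ g < M) {g : ℕ} (hg : g ∈ S.glues) (h : ℕ) :
    (S.relabel σ hσ M).bond (σ g) (σ h) = min (S.bond g h) 2 := by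
  by_cases hgh : g = h
  · subst hgh
    simp [bond, relabel, hM g hg]
  · simp [bond, hgh]

lemma relabel_sideBond (hM : ∀ g ∈ S.glues, σ g < M) {g : ℕ} (hg : g ∈ S.glues)
    (C : Config2) (q : ℤ × ℤ) (side : Tile2 → ℕ)
    (hside : ∀ u, side (glueRelabel σ u) = σ (side u)) :
    (S.relabel σ hσ M).sideBond (mapConfig (glueRelabel σ) C) q (σ g) side =
      min (S.sideBond C q g side) 2 := by
  cases hC : C q with
  | none => simp [sideBond, mapConfig, hC]
  | some u => simp [sideBond, mapConfig, hC, hside, relabel_bond hσ hM hg]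

lemma isRelabeling_relabel (hτ : S.temp ≤ 2) (hM : ∀ g ∈ S.glues, σ g < M) :
    IsRelabeling (glueRelabel σ) S (S.relabel σ hσ M) := by
  intro C t p
  have hmem : glueRelabel σ t ∈ (S.relabel σ hσ M).tiles ↔ t ∈ S.tiles :=
    Finset.mem_map_equiv.trans (by simp)
  have hfree : mapConfig (glueRelabel σ) C p = none ↔ C p = none := Option.map_eq_none_iff
  rw [Attachable, Attachable, hmem, hfree]
  refine and_congr_right fun ht => and_congr_right fun _ => ?_
  obtain ⟨hN, hE, hS, hW⟩ := glues_of_mem_tiles ht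
  have hτ' : (S.relabel σ hσ M).temp = S.temp := rfl
  -- capping strengths at `2` does not change which sums reach a temperature `≤ 2`
  simp only [hτ', bindStrength, glueRelabel_apply]
  rw [relabel_sideBond hσ hM hN _ _ _ fun _ => rfl,
    relabel_sideBond hσ hM hE _ _ _ fun _ => rfl, relabel_sideBond hσ hM hS _ _ _ fun _ => rfl,
    relabel_sideBond hσ hM hW _ _ _ fun _ => rfl]
  omega

end Relabel

lemma relabel_seedConfig (S : TileSystem2) (σ : Equiv.Perm ℕ) (hσ : σ 0 = 0) (M : ℕ) :
    (S.relabel σ hσ M).seedConfig = mapConfig (glueRelabel σ) S.seedConfig := by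
  funext q
  by_cases hq : q = (0, 0) <;> simp [seedConfig, mapConfig, relabel, hq]

lemma relabel_glues_lt {S : TileSystem2} {σ : Equiv.Perm ℕ} (hσ : σ 0 = 0) {M : ℕ}
    (hM : ∀ g ∈ S.glues, σ g < M) : ∀ g ∈ (S.relabel σ hσ M).glues, g < M := by
  intro g hg
  rcases Finset.mem_insert.mp hg with rfl | hg
  · simpa [hσ] using hM 0 S.zero_mem_glues
  obtain ⟨_, ht', hg⟩ := Finset.mem_biUnion.mp hg
  obtain ⟨t, ht, rfl⟩ := Finset.mem_map.mp ht'
  obtain ⟨hN, hE, hS, hW⟩ := glues_of_mem_tiles ht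
  simp only [Equiv.coe_toEmbedding, glueRelabel_apply, Finset.mem_insert,
    Finset.mem_singleton] at hg
  rcases hg with rfl | rfl | rfl | rfl
  exacts [hM _ hN, hM _ hE, hM _ hS, hM _ hW]

end TileSystem2

def canonicalSystems (K : ℕ) : Set TileSystem2 :=
  {S | S.tiles.card ≤ K ∧ (∀ g ∈ S.glues, g < 4 * K + 1) ∧ S.temp ≤ 2 ∧
    (∀ x, S.strength x ≤ 2) ∧ ∀ x, 4 * K + 1 ≤ x → S.strength x = 0}

lemma TileSystem2.exists_mem_canonicalSystems_probEvent_eq (S : TileSystem2) (hτ : S.temp ≤ 2)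
    {K : ℕ} (hK : S.tiles.card ≤ K) {E : Config2 → Prop}
    (hE : ∀ (e : Tile2 → Tile2) C, E (mapConfig e C) ↔ E C) :
    ∃ S' ∈ canonicalSystems K, S'.probEvent E = S.probEvent E := by
  obtain ⟨σ, hσ, hσΓ⟩ := S.glues.exists_perm_map_zero_lt_card S.zero_mem_glues
  have hM : ∀ g ∈ S.glues, σ g < 4 * K + 1 := fun g hg =>
    (hσΓ g hg).trans_le (S.card_glues_le.trans (by omega))
  refine ⟨S.relabel σ hσ (4 * K + 1),
    ⟨?_, relabel_glues_lt hσ hM, hτ, fun x => ?_, fun x hx => ?_⟩, ?_⟩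
  · simpa [relabel] using hK
  · simp only [relabel]
    split <;> omega
  · simp only [relabel, if_neg (Nat.not_lt.mpr hx)]
  · rw [probEvent, relabel_seedConfig,
      (isRelabeling_relabel hσ hτ hM).probEventFrom_eq _ (hE _)]
    rfl

def tileBox (M : ℕ) : Finset Tile2 :=
  (Finset.range M ×ˢ Finset.range M ×ˢ Finset.range M ×ˢ Finset.range M).image
    fun q => ⟨q.1, q.2.1, q.2.2.1, q.2.2.2⟩

lemma card_tileBox_le (M : ℕ) : (tileBox M).card ≤ M ^ 4 := by
  refine Finset.card_image_le.trans_eq ?_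
  simp only [Finset.card_product, Finset.card_range]
  ring

lemma mem_tileBox {M : ℕ} {t : Tile2} (hN : t.north < M) (hE : t.east < M) (hS : t.south < M)
    (hW : t.west < M) : t ∈ tileBox M :=
  Finset.mem_image.mpr ⟨(t.north, t.east, t.south, t.west), by simp [hN, hE, hS, hW], rfl⟩

def tileSetBox (M K : ℕ) : Finset (Finset Tile2) :=
  (Finset.range (K + 1)).biUnion fun j => (tileBox M).powersetCard j

lemma card_tileSetBox_le {M : ℕ} (hM : 0 < M) (K : ℕ) :
    (tileSetBox M K).card ≤ (K + 1) * (M ^ 4) ^ K := by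
  refine Finset.card_biUnion_le.trans ?_
  rw [← Finset.card_range (K + 1), ← smul_eq_mul, ← Finset.sum_const, Finset.card_range]
  refine Finset.sum_le_sum fun j hj => ?_
  rw [Finset.card_powersetCard]
  calc (tileBox M).card.choose j ≤ (tileBox M).card ^ j := Nat.choose_le_pow _ _
    _ ≤ (M ^ 4) ^ j := Nat.pow_le_pow_left (card_tileBox_le M) j
    _ ≤ (M ^ 4) ^ K := Nat.pow_le_pow_right (by positivity) (Finset.mem_range_succ_iff.mp hj)

def systemCode (M : ℕ) (S : TileSystem2) : Finset Tile2 × Tile2 × ℕ × (Fin M → ℕ) :=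
  (S.tiles, S.seed, S.temp, fun i => S.strength i)

lemma systemCode_injOn (K : ℕ) : Set.InjOn (systemCode (4 * K + 1)) (canonicalSystems K) := by
  rintro ⟨tiles₁, seed₁, str₁, temp₁, _, _⟩ ⟨-, -, -, -, hstr₁⟩
    ⟨tiles₂, seed₂, str₂, temp₂, _, _⟩ ⟨-, -, -, -, hstr₂⟩ hcode
  simp only [systemCode, Prod.mk.injEq, funext_iff] at hcode
  obtain ⟨rfl, rfl, rfl, hlow⟩ := hcode
  have : str₁ = str₂ := by
    funext x
    by_cases hx : x < 4 * K + 1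
    · exact hlow ⟨x, hx⟩
    · exact (hstr₁ x (by omega)).trans (hstr₂ x (by omega)).symm
  subst this
  rfl

lemma systemCode_mem (K : ℕ) {S : TileSystem2} (hS : S ∈ canonicalSystems K) :
    systemCode (4 * K + 1) S ∈ tileSetBox (4 * K + 1) K ×ˢ tileBox (4 * K + 1) ×ˢ
      Finset.range 3 ×ˢ Fintype.piFinset fun _ => Finset.range 3 := by
  obtain ⟨hcard, hglues, hτ, hstr, -⟩ := hS
  have htiles : S.tiles ⊆ tileBox (4 * K + 1) := fun t ht => by
    obtain ⟨hN, hE, hS, hW⟩ := TileSystem2.glues_of_mem_tiles ht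
    exact mem_tileBox (hglues _ hN) (hglues _ hE) (hglues _ hS) (hglues _ hW)
  simp only [systemCode, Finset.mem_product, Fintype.mem_piFinset, Finset.mem_range]
  refine ⟨Finset.mem_biUnion.mpr ⟨S.tiles.card, ?_, Finset.mem_powersetCard.mpr ⟨htiles, rfl⟩⟩,
    htiles S.seed_mem, by omega, fun i => (hstr i).trans_lt (by norm_num)⟩
  exact Finset.mem_range_succ_iff.mpr hcard

lemma ncard_canonicalSystems_le (K : ℕ) :
    (canonicalSystems K).ncard ≤ (4 * K + 3) ^ (8 * K + 7) := by
  have hcode := Set.ncard_le_ncard_of_injOn _ (fun S hS => systemCode_mem K hS)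
    (systemCode_injOn K) (Finset.finite_toSet _)
  rw [Set.ncard_coe_finset] at hcode
  refine hcode.trans ?_
  simp only [Finset.card_product, Finset.card_range, Fintype.card_piFinset, Finset.prod_const,
    Finset.card_univ, Fintype.card_fin]
  calc _ ≤ (K + 1) * ((4 * K + 1) ^ 4) ^ K * ((4 * K + 1) ^ 4 * (3 * 3 ^ (4 * K + 1))) := by
        gcongr
        exacts [card_tileSetBox_le (by omega) K, card_tileBox_le _]
    _ ≤ (4 * K + 3) * ((4 * K + 3) ^ 4) ^ K *
        ((4 * K + 3) ^ 4 * ((4 * K + 3) * (4 * K + 3) ^ (4 * K + 1))) := by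
        gcongr <;> omega
    _ = (4 * K + 3) ^ (8 * K + 7) := by
        generalize 4 * K + 3 = B
        ring

lemma canonicalSystems_finite (K : ℕ) : (canonicalSystems K).Finite :=
  .of_finite_image ((Finset.finite_toSet _).subset (Set.image_subset_iff.mpr
    fun _ hS => systemCode_mem K hS)) (systemCode_injOn K)

def squareEvent (n : ℕ) (C : Config2) : Prop :=
  ∃ v : ℤ × ℤ, shape2 C = (fun q => q + v) '' squareShape n

lemma ncard_squareShape (n : ℕ) : (squareShape n).ncard = n * n := by
  have : squareShape n = ↑(Finset.Ico (0 : ℤ) n ×ˢ Finset.Ico (0 : ℤ) n) := by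
    ext p
    simp [squareShape, rectShape, and_assoc]
  rw [this, Set.ncard_coe_finset, Finset.card_product, Int.card_Ico, sub_zero, Int.toNat_natCast]

lemma squareEvent_mapConfig (n : ℕ) (e : Tile2 → Tile2) (C : Config2) :
    squareEvent n (mapConfig e C) ↔ squareEvent n C := by
  simp [squareEvent]

lemma eq_of_squareEvent_of_squareEvent {n m : ℕ} {C : Config2} (hn : squareEvent n C)
    (hm : squareEvent m C) : n = m := by
  obtain ⟨v, hv⟩ := hn
  obtain ⟨w, hw⟩ := hm
  have hcard := congrArg Set.ncard (hv.symm.trans hw)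
  rw [Set.ncard_image_of_injective _ (add_left_injective v),
    Set.ncard_image_of_injective _ (add_left_injective w), ncard_squareShape,
    ncard_squareShape] at hcard
  exact Nat.mul_self_inj.mp hcard

lemma TileSystem2.eq_of_half_lt_probEvent_squareEvent (S : TileSystem2) {n m : ℕ}
    (hn : 1 / 2 < S.probEvent (squareEvent n)) (hm : 1 / 2 < S.probEvent (squareEvent m)) :
    n = m := by
  by_contra hnm
  have := S.probEventFrom_add_le_one (E₁ := squareEvent n) (E₂ := squareEvent m) S.seedConfig
    fun _ hCn hCm => hnm (eq_of_squareEvent_of_squareEvent hCn hCm)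
  rw [probEvent] at hn hm
  linarith

lemma ncard_le_ncard_of_half_lt_probEvent_squareEvent {A : Set ℕ} {F : Set TileSystem2}
    (hF : F.Finite) (hA : ∀ n ∈ A, ∃ S ∈ F, 1 / 2 < S.probEvent (squareEvent n)) :
    A.ncard ≤ F.ncard := by
  have : Finite F := hF
  choose f hfF hf using hA
  let g : A → F := fun n => ⟨f n n.2, hfF n n.2⟩
  have hg : Function.Injective g := fun n m hnm => by
    have hfnm : f n n.2 = f m m.2 := congrArg Subtype.val hnm
    exact Subtype.ext ((f n n.2).eq_of_half_lt_probEvent_squareEvent (hf n n.2) (hfnm ▸ hf m m.2))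
  simpa only [Nat.card_coe_set_eq] using Nat.card_le_card_of_injective g hg

lemma exp_one_le_log_sixteen : exp 1 ≤ log 16 := by
  have h : log 16 = 4 * log 2 := by
    rw [show (16 : ℝ) = 2 ^ 4 by norm_num, Real.log_pow]
    norm_num
  linarith [Real.log_two_gt_d9, Real.exp_one_lt_d9]

lemma div_log_le_div_log {x y : ℝ} (hx : exp 1 ≤ x) (hxy : x ≤ y) : x / log x ≤ y / log y := by
  have hx0 : 0 < x := (Real.exp_pos 1).trans_le hx
  have hlx := (Real.le_log_iff_exp_le hx0).mpr hx
  have hly := (Real.le_log_iff_exp_le (hx0.trans_le hxy)).mpr (hx.trans hxy)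
  have h := Real.log_div_self_antitoneOn (Set.mem_Ici.mpr hx) (Set.mem_Ici.mpr (hx.trans hxy)) hxy
  rw [div_le_div_iff₀ (by linarith) hx0] at h
  rw [div_le_div_iff₀ (by linarith) (by linarith)]
  linarith

lemma pow_le_exp_half {x : ℝ} (hx : 1 ≤ log x) (hlog : 28 * log x ≤ x) {K : ℕ}
    (hK : (K : ℝ) ≤ 1 / 32 * (x / log x)) : ((4 * K + 3 : ℕ) : ℝ) ^ (8 * K + 7) ≤ exp (x / 2) := by
  have hKx : 32 * K * log x ≤ x := by
    calc 32 * K * log x ≤ 32 * (1 / 32 * (x / log x)) * log x := by gcongr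
      _ = x := by field_simp
  have hK' : 32 * (K : ℝ) ≤ x := le_trans (by nlinarith [(K.cast_nonneg : (0 : ℝ) ≤ K)]) hKx
  have hbase : ((4 * K + 3 : ℕ) : ℝ) ≤ x := by push_cast; linarith
  have hbase0 : (0 : ℝ) < ((4 * K + 3 : ℕ) : ℝ) := by positivity
  rw [← Real.exp_log (pow_pos hbase0 _), Real.exp_le_exp, Real.log_pow]
  calc ((8 * K + 7 : ℕ) : ℝ) * log ((4 * K + 3 : ℕ) : ℝ) ≤ ((8 * K + 7 : ℕ) : ℝ) * log x :=
        mul_le_mul_of_nonneg_left (Real.log_le_log hbase0 hbase) (by positivity)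
    _ ≤ x / 2 := by push_cast; nlinarith

lemma eventually_log_log_bounds :
    ∀ᶠ N : ℕ in atTop, 1 ≤ log (log N) ∧ 28 * log (log N) ≤ log N := by
  have hlog : Tendsto (fun N : ℕ => log N) atTop atTop :=
    Real.tendsto_log_atTop.comp tendsto_natCast_atTop_atTop
  have hsmall : ∀ᶠ x : ℝ in atTop, 28 * log x ≤ x := by
    filter_upwards [Real.isLittleO_log_id_atTop.bound (by norm_num : (0 : ℝ) < 1 / 28),
      eventually_ge_atTop 1] with x hx hx1
    rw [Real.norm_of_nonneg (Real.log_nonneg hx1), id, Real.norm_of_nonneg (by linarith)] at hx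
    linarith
  filter_upwards [hlog.eventually (eventually_ge_atTop (exp 1)), hlog.eventually hsmall]
    with N hN hN'
  exact ⟨(Real.le_log_iff_exp_le ((Real.exp_pos 1).trans_le hN)).mpr hN, hN'⟩

lemma tendsto_const_add_sqrt_div_atTop (c : ℝ) :
    Tendsto (fun N : ℕ => (c + √N) / N) atTop (𝓝 0) := by
  have hsqrt : Tendsto (fun N : ℕ => √N / N) atTop (𝓝 0) := by
    simp only [Real.sqrt_div_self]
    exact (Real.tendsto_sqrt_atTop.comp tendsto_natCast_atTop_atTop).inv_tendsto_atTop
  simpa [add_div] using (tendsto_const_div_atTop_nhds_zero_nat c).add hsqrt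

lemma tendsto_ncard_div_nhds_one_of_ncard_not_le {P : ℕ → Prop} {f : ℕ → ℝ}
    (hf : Tendsto (fun N : ℕ => f N / N) atTop (𝓝 0))
    (hP : ∀ᶠ N : ℕ in atTop, ({n | 1 ≤ n ∧ n ≤ N ∧ ¬ P n}.ncard : ℝ) ≤ f N) :
    Tendsto (fun N : ℕ => ({n | 1 ≤ n ∧ n ≤ N ∧ P n}.ncard : ℝ) / N) atTop (𝓝 1) := by
  have hsplit : ∀ N : ℕ, ({n | 1 ≤ n ∧ n ≤ N ∧ P n}.ncard : ℝ) =
      N - {n | 1 ≤ n ∧ n ≤ N ∧ ¬ P n}.ncard := by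
    intro N
    have hgood : {n | 1 ≤ n ∧ n ≤ N ∧ P n} = Set.Icc 1 N ∩ {n | P n} := by
      ext
      simp [and_assoc]
    have hbad : {n | 1 ≤ n ∧ n ≤ N ∧ ¬ P n} = Set.Icc 1 N \ {n | P n} := by
      ext
      simp [and_assoc]
    have h := Set.ncard_inter_add_ncard_sdiff_eq_ncard (Set.Icc 1 N) {n | P n}
    rw [← hgood, ← hbad, Set.ncard_Icc_nat, Nat.add_sub_cancel] at h
    rw [eq_sub_iff_add_eq]
    exact_mod_cast h
  have hbad : Tendsto (fun N : ℕ => ({n | 1 ≤ n ∧ n ≤ N ∧ ¬ P n}.ncard : ℝ) / N) atTop (𝓝 0) :=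
    squeeze_zero' (.of_forall fun N => by positivity)
      (hP.mono fun N hN => div_le_div_of_nonneg_right hN N.cast_nonneg) hf
  have hlim := (tendsto_const_nhds (x := (1 : ℝ))).sub hbad
  rw [sub_zero] at hlim
  refine hlim.congr' ?_
  filter_upwards [eventually_ge_atTop 1] with N hN
  rw [hsplit, sub_div, div_self (by positivity)]

def SquareComplexityAtLeast (d : ℝ) (n : ℕ) : Prop :=
  ∀ S : TileSystem2, (S.temp = 1 ∨ S.temp = 2) → 1 / 2 < S.probEvent (squareEvent n) →
    d * (log n / log (log n)) ≤ (S.tiles.card : ℝ)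

lemma ncard_not_squareComplexityAtLeast_le {d : ℝ} (hd : 0 ≤ d) (N : ℕ) :
    {n | 1 ≤ n ∧ n ≤ N ∧ ¬ SquareComplexityAtLeast d n}.ncard ≤
      15 + (canonicalSystems ⌊d * (log N / log (log N))⌋₊).ncard := by
  refine (Set.ncard_le_ncard_sdiff_add_ncard _ (Set.Icc 1 15) (Set.finite_Icc 1 15)).trans ?_
  rw [Set.ncard_Icc_nat, add_comm]
  refine Nat.add_le_add_left (ncard_le_ncard_of_half_lt_probEvent_squareEvent
    (canonicalSystems_finite _) ?_) _
  rintro n ⟨⟨hn1, hnN, hn⟩, hn15⟩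
  have hn16 : 16 ≤ n := by
    by_contra h
    exact hn15 ⟨hn1, by omega⟩
  simp only [SquareComplexityAtLeast, not_forall, not_le] at hn
  obtain ⟨S, hτ, hS, hsmall⟩ := hn
  have hlog : exp 1 ≤ log n :=
    exp_one_le_log_sixteen.trans (Real.log_le_log (by norm_num) (by exact_mod_cast hn16))
  have hcard : S.tiles.card ≤ ⌊d * (log N / log (log N))⌋₊ := by
    refine Nat.le_floor (hsmall.le.trans (mul_le_mul_of_nonneg_left ?_ hd))
    exact div_log_le_div_log hlog
      (Real.log_le_log (by positivity) (by exact_mod_cast hnN))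
  obtain ⟨S', hS', hprob⟩ := S.exists_mem_canonicalSystems_probEvent_eq (by omega) hcard
    (squareEvent_mapConfig n)
  exact ⟨S', hS', hprob ▸ hS⟩

/-- **Theorem (Kolmogorov lower bound for probabilistic square assembly).**
There is a constant `d > 0` such that the set of positive integers `n` with
the following property has natural density 1: every 2D tile system of
temperature 1 or 2 that terminally assembles an `n × n` square (up to
translation) with probability greater than `1/2` has tile complexity at least
`d · log n / log log n`. -/
theorem square_prob_kolmogorov_lower_bound :
    ∃ d : ℝ, 0 < d ∧
      Filter.Tendsto
        (fun N : ℕ =>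
          (Set.ncard {n : ℕ | 1 ≤ n ∧ n ≤ N ∧
            ∀ S : TileSystem2, (S.temp = 1 ∨ S.temp = 2) →
              1 / 2 < S.probEvent (fun C =>
                  ∃ v : ℤ × ℤ, shape2 C = (fun q => q + v) '' squareShape n) →
              d * (Real.log n / Real.log (Real.log n)) ≤ (S.tiles.card : ℝ)} : ℝ) /
            (N : ℝ))
        Filter.atTop (nhds 1) := by
  refine ⟨1 / 32, by norm_num, tendsto_ncard_div_nhds_one_of_ncard_not_le
    (P := SquareComplexityAtLeast (1 / 32)) (tendsto_const_add_sqrt_div_atTop 15) ?_⟩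
  filter_upwards [eventually_log_log_bounds] with N ⟨hlog, hsmall⟩
  set K := ⌊1 / 32 * (log N / log (log N))⌋₊
  have hN : (0 : ℝ) < N := Nat.cast_pos.mpr (Nat.pos_of_ne_zero (by rintro rfl; norm_num at hlog))
  calc _ ≤ ((15 + (canonicalSystems K).ncard : ℕ) : ℝ) :=
        Nat.cast_le.mpr (ncard_not_squareComplexityAtLeast_le (by norm_num) N)
    _ ≤ 15 + ((4 * K + 3 : ℕ) : ℝ) ^ (8 * K + 7) := by
        rw [Nat.cast_add, Nat.cast_ofNat, ← Nat.cast_pow]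
        gcongr
        exact ncard_canonicalSystems_le K
    _ ≤ 15 + exp (log N / 2) := by
        gcongr
        refine pow_le_exp_half hlog hsmall (Nat.floor_le ?_)
        exact mul_nonneg (by norm_num) (div_nonneg (by linarith) (by linarith))
    _ = 15 + √N := by rw [Real.exp_half, Real.exp_log hN]
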